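/- Let M be a 5×5 alternating matrix over a commutative ring R. For i = 1,…,5 let Pfᵢ denote the Pfaffian of the 4×4 alternating matrix obtained from M by deleting the i-th row and i-th column (explicitly, Pf₁ = M₂₃M₄₅ − M₂₄M₃₅ + M₂₅M₃₄, and similarly for the others). Then for every i, ∑ⱼ (−1)ʲ Mᵢⱼ · Pfⱼ = 0; that is, the matrix M annihilates the signed vector of its principal 4×4 Pfaffians. -/

import Mathlib

/-!
Since `Fin.succAbove j` is monotone, every principal 4×4 Pfaffian is a polynomial in the entries
above the diagonal. After the entries of row `i` left of the diagonal are rewritten by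
skew-symmetry, the `i`-th identity is the row expansion of the Pfaffian of the 6×6 alternating
matrix obtained from `M` by repeating its `i`-th row and column, which vanishes; `ring` checks it.
-/

open Matrix

/-- The Pfaffian of a 4×4 alternating matrix, in terms of its upper-triangular entries. -/
def pfaffianFour {R : Type*} [CommRing R] (N : Matrix (Fin 4) (Fin 4) R) : R :=
  N 0 1 * N 2 3 - N 0 2 * N 1 3 + N 0 3 * N 1 2

theorem pfaffianFour_submatrix_succAbove {R : Type*} [CommRing R]
    (M : Matrix (Fin 5) (Fin 5) R) (j : Fin 5) :
    pfaffianFour (M.submatrix j.succAbove j.succAbove) =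
      ![M 1 2 * M 3 4 - M 1 3 * M 2 4 + M 1 4 * M 2 3,
        M 0 2 * M 3 4 - M 0 3 * M 2 4 + M 0 4 * M 2 3,
        M 0 1 * M 3 4 - M 0 3 * M 1 4 + M 0 4 * M 1 3,
        M 0 1 * M 2 4 - M 0 2 * M 1 4 + M 0 4 * M 1 2,
        M 0 1 * M 2 3 - M 0 2 * M 1 3 + M 0 3 * M 1 2] j := by
  fin_cases j <;> rfl

theorem sum_neg_one_pow_mul_pfaffianFour_submatrix_succAbove {R : Type*} [CommRing R]
    (M : Matrix (Fin 5) (Fin 5) R) (x : Fin 5 → R) :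
    ∑ j : Fin 5, (-1 : R) ^ (j : ℕ) * x j *
        pfaffianFour (M.submatrix (Fin.succAbove j) (Fin.succAbove j)) =
      x 0 * (M 1 2 * M 3 4 - M 1 3 * M 2 4 + M 1 4 * M 2 3)
      - x 1 * (M 0 2 * M 3 4 - M 0 3 * M 2 4 + M 0 4 * M 2 3)
      + x 2 * (M 0 1 * M 3 4 - M 0 3 * M 1 4 + M 0 4 * M 1 3)
      - x 3 * (M 0 1 * M 2 4 - M 0 2 * M 1 4 + M 0 4 * M 1 2)
      + x 4 * (M 0 1 * M 2 3 - M 0 2 * M 1 3 + M 0 3 * M 1 2) := by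
  simp only [Fin.sum_univ_five, pfaffianFour_submatrix_succAbove, cons_val]
  norm_num
  ring

theorem apply_eq_neg_apply_of_transpose_eq_neg {n R : Type*} [Neg R] {M : Matrix n n R}
    (hskew : Mᵀ = -M) (i j : n) : M i j = -M j i :=
  congrFun₂ hskew j i

/-- A 5×5 alternating matrix annihilates the signed vector of its principal 4×4
Pfaffians (the Buchsbaum–Eisenbud complex relation for 5×5 Pfaffians). -/
theorem alternating_five_mul_pfaffian_vector_eq_zero {R : Type*} [CommRing R]
    (M : Matrix (Fin 5) (Fin 5) R) (hskew : Mᵀ = -M) (hdiag : ∀ i, M i i = 0) :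
    ∀ i : Fin 5,
      ∑ j : Fin 5, (-1 : R) ^ (j : ℕ) * M i j *
        pfaffianFour (M.submatrix (Fin.succAbove j) (Fin.succAbove j)) = 0 := by
  have hlower := apply_eq_neg_apply_of_transpose_eq_neg hskew
  intro i
  rw [sum_neg_one_pow_mul_pfaffianFour_submatrix_succAbove]
  fin_cases i <;>
    simp only [Fin.zero_eta, Fin.mk_one, Fin.reduceFinMk, hdiag, hlower 1 0, hlower 2 0,
      hlower 2 1, hlower 3 0, hlower 3 1, hlower 3 2, hlower 4 0, hlower 4 1, hlower 4 2,
      hlower 4 3] <;>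
    ring
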